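/- Let A ∈ B^{n×n}, λ ∈ B, K, L a partition of N = {1,...,n}, with L_1, L', L̃ and Λ as defined. For x_L = λ·1_L ⊕ Λ_{L,L̃} ⊗ z_{L̃} with z_{L̃} ∈ B^{|L̃|}, the set of vectors x_K ∈ B^K with x_K ≤ λ·1_K solving A_{KK} ⊗ x_K ⊕ A_{KL} ⊗ x_L = x_K equals S_K(x_L,λ) = { λ ⊗ (A_{KK})^* ⊗ A_{KL} ⊗ 1_L ⊕ (A_{KK})^* ⊗ A_{K L̃} ⊗ Λ_{L̃,L̃} ⊗ z_{L̃} ⊕ (A_{KK})^*_λ ⊗ z_K : z_K ∈ B^{|K|} }. -/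

import Mathlib

noncomputable section

/-- The max-min algebra: the unit interval `[0,1] ⊆ ℝ` with `⊕ = max = ⊔` and `⊗ = min = ⊓`. -/
abbrev B : Type := unitInterval

instance : Fact ((0:ℝ) ≤ 1) := ⟨zero_le_one⟩

/-- Max-min matrix-vector product: `(A ⊗ x)_i = max_j min (A i j) (x j)`. -/
def mmVec {α β : Type*} (A : Matrix α β B) (x : β → B) : α → B :=
  fun i => ⨆ j, A i j ⊓ x j

/-- Max-min matrix-matrix product. -/
def mmMul {α β γ : Type*} (A : Matrix α β B) (C : Matrix β γ B) : Matrix α γ B :=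
  fun i k => ⨆ j, A i j ⊓ C j k

/-- The max-min identity matrix. -/
def mmId (α : Type*) [DecidableEq α] : Matrix α α B :=
  fun i j => if i = j then 1 else 0

/-- Max-min matrix powers, `A^0 = I`. -/
def mmPow {α : Type*} [DecidableEq α] (A : Matrix α α B) : ℕ → Matrix α α B
  | 0 => mmId α
  | k + 1 => mmMul A (mmPow A k)

/-- The metric matrix `A⁺ = A ⊕ A² ⊕ ... ⊕ Aⁿ`. -/
def mmPlus {α : Type*} [Fintype α] [DecidableEq α] (A : Matrix α α B) : Matrix α α B :=
  fun i j => ⨆ k ∈ Finset.Icc 1 (Fintype.card α), mmPow A k i j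

/-- The Kleene star `A* = I ⊕ A ⊕ ... ⊕ A^{n-1}`. -/
def mmStar {α : Type*} [Fintype α] [DecidableEq α] (A : Matrix α α B) : Matrix α α B :=
  fun i j => ⨆ k ∈ Finset.range (Fintype.card α), mmPow A k i j

/-- The matrix `A*_λ`, whose `i`-th column has entries `min (λ, (A⁺)_{ii}, (A*)_{ki})`. -/
def mmStarLam {α : Type*} [Fintype α] [DecidableEq α] (A : Matrix α α B) (lam : B) :
    Matrix α α B :=
  fun k i => lam ⊓ mmPlus A i i ⊓ mmStar A k i

/-- Submatrix of `A` with rows in `P` and columns in `Q`. -/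
def subM {n : ℕ} (A : Matrix (Fin n) (Fin n) B) (P Q : Finset (Fin n)) :
    Matrix ↥P ↥Q B :=
  fun i j => A i j

/-- Subvector of `x` indexed by `P`. -/
def subV {n : ℕ} (x : Fin n → B) (P : Finset (Fin n)) : ↥P → B :=
  fun i => x i

/-- `x` is a `(K,L)` `λ`-eigenvector of `A`: `A ⊗ x = λ ⊗ x`, `x_i ≤ λ` for `i ∈ K`,
`x_i ≥ λ` for `i ∈ L`. -/
def IsKLEig {n : ℕ} (A : Matrix (Fin n) (Fin n) B) (lam : B) (K L : Finset (Fin n))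
    (x : Fin n → B) : Prop :=
  mmVec A x = (fun i => lam ⊓ x i) ∧ (∀ i ∈ K, x i ≤ lam) ∧ (∀ i ∈ L, lam ≤ x i)

/-- `L₁ = {i ∈ L : max_{j∈L} a_{ij} ≥ λ}`. -/
def L1set {n : ℕ} (A : Matrix (Fin n) (Fin n) B) (lam : B) (L : Finset (Fin n)) :
    Finset (Fin n) :=
  L.filter fun i => lam ≤ ⨆ j ∈ L, A i j

/-- `L₂ = {i ∈ L : max_{j∈L} a_{ij} < λ}`. -/
def L2set {n : ℕ} (A : Matrix (Fin n) (Fin n) B) (lam : B) (L : Finset (Fin n)) :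
    Finset (Fin n) :=
  L.filter fun i => (⨆ j ∈ L, A i j) < lam

/-- `L^{>λ,L₁} = {k ∈ L : max_{i ∈ L₁} a_{ik} > λ}`. -/
def LgtL1set {n : ℕ} (A : Matrix (Fin n) (Fin n) B) (lam : B) (L : Finset (Fin n)) :
    Finset (Fin n) :=
  L.filter fun k => lam < ⨆ i ∈ L1set A lam L, A i k

/-- `L^{>λ,K} = {ℓ ∈ L : max_{k ∈ K} ((A_{KK})* ⊗ A_{KL})_{kℓ} > λ}`. (The matrix
`(A_{KK})* ⊗ A_{K,N}` has, for `ℓ ∈ L`, exactly the same entries in column `ℓ` as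
`(A_{KK})* ⊗ A_{KL}`.) -/
def LgtKset {n : ℕ} (A : Matrix (Fin n) (Fin n) B) (lam : B) (K L : Finset (Fin n)) :
    Finset (Fin n) :=
  L.filter fun ℓ =>
    lam < ⨆ k : ↥K, mmMul (mmStar (subM A K K)) (fun (p : ↥K) (q : Fin n) => A p q) k ℓ

/-- `L' = L^{>λ,L₁} ∪ L^{>λ,K}`. -/
def LprimeSet {n : ℕ} (A : Matrix (Fin n) (Fin n) B) (lam : B) (K L : Finset (Fin n)) :
    Finset (Fin n) :=
  LgtL1set A lam L ∪ LgtKset A lam K L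

/-- `L̃ = L \ L'`. -/
def LtilSet {n : ℕ} (A : Matrix (Fin n) (Fin n) B) (lam : B) (K L : Finset (Fin n)) :
    Finset (Fin n) :=
  L \ LprimeSet A lam K L

/-- The submatrix `Λ_{P,Q}` of the matrix `Λ` with `Λ_{ii} = 1` and `Λ_{ij} = λ` for `i ≠ j`. -/
def LamSub {n : ℕ} (lam : B) (P Q : Finset (Fin n)) : Matrix ↥P ↥Q B :=
  fun p q => if (p : Fin n) = (q : Fin n) then 1 else lam

/-! Write `M = A_{KK}` and `b = A_{KL} ⊗ x_L`. Iterating `x = M ⊗ x ⊕ b` gives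
`x ≤ M^n ⊗ x ⊕ M^* ⊗ b` with `n = |K|`. A walk of length `n` repeats a node, so each term
`(M^n)_{ik} ⊗ x_k` is dominated by a walk from `i` to a node `l` on a cycle, together with
`x_l ≥ (M^r)_{lk} ⊗ x_k`; for `x ≤ λ` these terms are collected by `M^*_λ ⊗ x`. Conversely
`M^* ⊗ b ⊕ M^*_λ ⊗ z` always solves the equation, and it stays below `λ` once `M^* ⊗ b` does.
For the given `x_L` we have `b = λ ⊗ A_{KL} ⊗ 1_L ⊕ A_{KL̃} ⊗ Λ_{L̃L̃} ⊗ z_{L̃}`, since the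
entries of `Λ` outside the diagonal of `L̃` are `λ`, and `M^* ⊗ A_{KL̃} ≤ λ` because `L̃`
avoids `L^{>λ,K}`. -/

open Finset

section Algebra

variable {α β γ : Type*}

lemma inf_le_mmVec (P : Matrix α β B) (y : β → B) (i : α) (j : β) :
    P i j ⊓ y j ≤ mmVec P y i :=
  le_iSup (fun j => P i j ⊓ y j) j

lemma mmVec_mono {P Q : Matrix α β B} {y z : β → B} (hPQ : ∀ i j, P i j ≤ Q i j)
    (hyz : ∀ j, y j ≤ z j) (i : α) : mmVec P y i ≤ mmVec Q z i :=
  iSup_mono fun j => inf_le_inf (hPQ i j) (hyz j)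

lemma mmVec_le_of_le {P : Matrix α β B} {y : β → B} {c : B} {i : α} (hP : ∀ j, P i j ≤ c) :
    mmVec P y i ≤ c :=
  iSup_le fun j => inf_le_left.trans (hP j)

lemma mmVec_sup (P : Matrix α β B) (y z : β → B) (i : α) :
    mmVec P (fun j => y j ⊔ z j) i = mmVec P y i ⊔ mmVec P z i := by
  simp only [mmVec, inf_sup_left, iSup_sup_eq]

lemma mmVec_sup_left (P Q : Matrix α β B) (y : β → B) (i : α) :
    mmVec (fun i j => P i j ⊔ Q i j) y i = mmVec P y i ⊔ mmVec Q y i := by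
  simp only [mmVec, inf_sup_right, iSup_sup_eq]

lemma mmVec_inf_const (P : Matrix α β B) (c : B) (y : β → B) (i : α) :
    mmVec P (fun j => c ⊓ y j) i = c ⊓ mmVec P y i := by
  simp only [mmVec, inf_iSup_eq, inf_left_comm]

lemma mmVec_const (P : Matrix α β B) (c : B) (i : α) :
    mmVec P (fun _ => c) i = c ⊓ mmVec P (fun _ => 1) i := by
  rw [← mmVec_inf_const]
  exact congrArg (mmVec P · i) (funext fun _ => (inf_top_eq c).symm)

lemma mmVec_mmMul (P : Matrix α β B) (Q : Matrix β γ B) (y : γ → B) (i : α) :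
    mmVec (mmMul P Q) y i = mmVec P (mmVec Q y) i := by
  simp only [mmVec, mmMul, iSup_inf_eq, inf_iSup_eq, inf_assoc]
  exact iSup_comm

end Algebra

section Powers

variable {α : Type*} [DecidableEq α] (M : Matrix α α B)

lemma mmId_inf_le {i k : α} {a b : B} (h : i = k → a ≤ b) : mmId α i k ⊓ a ≤ b := by
  by_cases hik : i = k
  · exact inf_le_right.trans (h hik)
  · simp [mmId, hik]

lemma mmVec_mmId (y : α → B) (i : α) : mmVec (mmId α) y i = y i :=
  le_antisymm (iSup_le fun _ => mmId_inf_le fun h => h ▸ le_rfl)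
    (le_iSup_of_le i (by simp [mmId, unitInterval.le_one']))

lemma mmPow_inf_mmPow_le (a b : ℕ) (i k j : α) :
    mmPow M a i k ⊓ mmPow M b k j ≤ mmPow M (a + b) i j := by
  induction a generalizing i with
  | zero => exact mmId_inf_le fun h => h ▸ (zero_add b).symm ▸ le_rfl
  | succ a ih =>
    rw [Nat.succ_add]
    simp only [mmPow, mmMul, iSup_inf_eq, inf_assoc]
    exact iSup_mono fun l => inf_le_inf_left _ (ih l)

lemma le_mmPow_of_chain {v : B} (p : ℕ → α) (a t : ℕ)
    (hp : ∀ s < t, v ≤ M (p (a + s)) (p (a + s + 1))) : v ≤ mmPow M t (p a) (p (a + t)) := by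
  induction t generalizing a with
  | zero => simp [mmPow, mmId, unitInterval.le_one']
  | succ t ih =>
    have hrest := ih (a + 1) fun s hs => by
      have h := hp (s + 1) (by omega)
      rwa [← Nat.add_assoc, Nat.add_right_comm a s 1] at h
    rw [Nat.add_right_comm, Nat.add_assoc] at hrest
    exact le_iSup_of_le (p (a + 1)) (le_inf (hp 0 t.succ_pos) hrest)

lemma exists_chain_of_le_mmPow [Fintype α] {v : B} (hv : ⊥ < v) (t : ℕ) (i j : α)
    (h : v ≤ mmPow M t i j) :
    ∃ p : ℕ → α, p 0 = i ∧ p t = j ∧ ∀ s < t, v ≤ M (p s) (p (s + 1)) := by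
  induction t generalizing i with
  | zero =>
    by_cases hij : i = j
    · exact ⟨fun _ => i, rfl, hij, by omega⟩
    · simp [mmPow, mmId, hij] at h
      exact absurd (hv.trans_le h.le) (lt_irrefl _)
  | succ t ih =>
    obtain ⟨k, -, hk⟩ := (Finset.le_sup_iff hv).mp (h.trans_eq (sup_univ_eq_iSup _).symm)
    obtain ⟨q, hq0, hqt, hq⟩ := ih k (hk.trans inf_le_right)
    refine ⟨fun | 0 => i | s + 1 => q s, rfl, hqt, fun s hs => ?_⟩
    cases s with
    | zero => simpa [hq0] using hk.trans inf_le_left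
    | succ s => exact hq s (by omega)

lemma mmPow_vec_le_of_mmVec_le {x : α → B} (hx : ∀ i, mmVec M x i ≤ x i) (t : ℕ) (i : α) :
    mmVec (mmPow M t) x i ≤ x i := by
  induction t generalizing i with
  | zero => exact (mmVec_mmId x i).le
  | succ t ih =>
    rw [mmPow, mmVec_mmMul]
    exact (mmVec_mono (fun _ _ => le_rfl) ih i).trans (hx i)

end Powers

section Star

variable {α : Type*} [Fintype α] [DecidableEq α] (M : Matrix α α B)

lemma mmPow_le_mmStar_of_lt {t : ℕ} (ht : t < Fintype.card α) (i j : α) :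
    mmPow M t i j ≤ mmStar M i j :=
  le_iSup₂_of_le (f := fun t _ => mmPow M t i j) t (mem_range.mpr ht) le_rfl

lemma mmPow_le_mmPlus {t : ℕ} (ht₁ : 1 ≤ t) (ht₂ : t ≤ Fintype.card α) (i j : α) :
    mmPow M t i j ≤ mmPlus M i j :=
  le_iSup₂_of_le (f := fun t _ => mmPow M t i j) t (mem_Icc.mpr ⟨ht₁, ht₂⟩) le_rfl

lemma exists_cycle_of_le_mmPow_card {v : B} (hv : ⊥ < v) {i j : α}
    (h : v ≤ mmPow M (Fintype.card α) i j) :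
    ∃ k a c, 0 < c ∧ a + c ≤ Fintype.card α ∧ v ≤ mmPow M a i k ∧ v ≤ mmPow M c k k ∧
      v ≤ mmPow M (Fintype.card α - (a + c)) k j := by
  set m := Fintype.card α
  obtain ⟨p, rfl, rfl, hp⟩ := exists_chain_of_le_mmPow M hv m i j h
  obtain ⟨a, b, hab, hbm, hpab⟩ : ∃ a b : ℕ, a < b ∧ b ≤ m ∧ p a = p b := by
    obtain ⟨a, b, hne, heq⟩ :=
      Fintype.exists_ne_map_eq_of_card_lt (fun s : Fin (m + 1) => p s) (by simp [m])
    rcases hne.lt_or_gt with h | h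
    exacts [⟨a, b, h, b.is_le, heq⟩, ⟨b, a, h, a.is_le, heq.symm⟩]
  have segment : ∀ s t, s + t ≤ m → v ≤ mmPow M t (p s) (p (s + t)) := fun s t hst =>
    le_mmPow_of_chain M p s t fun r hr => hp (s + r) (by omega)
  refine ⟨p a, a, b - a, by omega, by omega, by simpa using segment 0 a (by omega), ?_, ?_⟩
  · simpa [Nat.add_sub_cancel' hab.le, ← hpab] using segment a (b - a) (by omega)
  · simpa [hpab, show b + (m - (a + (b - a))) = m by omega] using
      segment b (m - (a + (b - a))) (by omega)

lemma mmPow_card_le_mmStar (i j : α) : mmPow M (Fintype.card α) i j ≤ mmStar M i j := by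
  rcases eq_bot_or_bot_lt (mmPow M (Fintype.card α) i j) with h | hv
  · exact h.le.trans bot_le
  obtain ⟨k, a, c, hc, hac, hik, -, hkj⟩ := exists_cycle_of_le_mmPow_card M hv le_rfl
  exact (le_inf hik hkj).trans <|
    (mmPow_inf_mmPow_le M _ _ i k j).trans (mmPow_le_mmStar_of_lt M (by omega) i j)

lemma mmPow_le_mmStar {t : ℕ} (ht : t ≤ Fintype.card α) (i j : α) :
    mmPow M t i j ≤ mmStar M i j := by
  rcases ht.lt_or_eq with ht | rfl
  exacts [mmPow_le_mmStar_of_lt M ht i j, mmPow_card_le_mmStar M i j]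

lemma mmMul_mmStar_le (i k : α) : mmMul M (mmStar M) i k ≤ mmStar M i k :=
  iSup_le fun j => by
    rw [mmStar, inf_iSup₂_eq]
    exact iSup₂_le fun t ht => (le_iSup_of_le j le_rfl).trans
      (mmPow_le_mmStar M (mem_range.mp ht) i k)

lemma mmPow_succ_le_mmMul_mmStar {s : ℕ} (hs : s < Fintype.card α) (i k : α) :
    mmPow M (s + 1) i k ≤ mmMul M (mmStar M) i k :=
  iSup_mono fun j => inf_le_inf_left _ (mmPow_le_mmStar_of_lt M hs j k)

lemma mmStar_le_mmId_sup (i k : α) : mmStar M i k ≤ mmId α i k ⊔ mmMul M (mmStar M) i k :=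
  iSup₂_le fun t ht => match t with
    | 0 => le_sup_left
    | s + 1 => le_sup_of_le_right
      (mmPow_succ_le_mmMul_mmStar M (by have := mem_range.mp ht; omega) i k)

lemma mmPlus_le_mmMul_mmStar (i k : α) : mmPlus M i k ≤ mmMul M (mmStar M) i k :=
  iSup₂_le fun t ht => match t with
    | 0 => absurd (mem_Icc.mp ht).1 (by omega)
    | s + 1 => mmPow_succ_le_mmMul_mmStar M (by have := (mem_Icc.mp ht).2; omega) i k

lemma mmStar_inf_mmPlus_le (i k : α) :
    mmStar M i k ⊓ mmPlus M k k ≤ mmMul M (mmStar M) i k := by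
  refine (inf_le_inf_right _ (mmStar_le_mmId_sup M i k)).trans ?_
  rw [inf_sup_right]
  exact sup_le (mmId_inf_le fun h => h ▸ mmPlus_le_mmMul_mmStar M k k) inf_le_left

lemma mmStarLam_le_mmMul (lam : B) (i k : α) :
    mmStarLam M lam i k ≤ mmMul M (mmStarLam M lam) i k := by
  calc mmStarLam M lam i k ≤ (lam ⊓ mmPlus M k k) ⊓ mmMul M (mmStar M) i k :=
        le_inf inf_le_left (le_inf inf_le_right (inf_le_left.trans inf_le_right) |>.trans
          (mmStar_inf_mmPlus_le M i k))
    _ = mmMul M (mmStarLam M lam) i k := by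
        simp only [mmMul, mmStarLam, inf_iSup_eq, inf_left_comm]

lemma mmMul_mmStarLam_le (lam : B) (i k : α) :
    mmMul M (mmStarLam M lam) i k ≤ mmStarLam M lam i k :=
  iSup_le fun j => by
    rw [mmStarLam, inf_left_comm]
    exact inf_le_inf_left _ ((le_iSup_of_le j le_rfl).trans (mmMul_mmStar_le M i k))

end Star

section Solutions

variable {α : Type*} [Fintype α] [DecidableEq α] (M : Matrix α α B)

lemma le_mmStar_vec (y : α → B) (i : α) : y i ≤ mmVec (mmStar M) y i :=
  (mmVec_mmId y i).ge.trans <|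
    mmVec_mono (fun i j => mmPow_le_mmStar_of_lt M (Fintype.card_pos_iff.mpr ⟨i⟩) i j)
      (fun _ => le_rfl) i

lemma mmVec_mmStar_vec_le (y : α → B) (i : α) :
    mmVec M (mmVec (mmStar M) y) i ≤ mmVec (mmStar M) y i := by
  rw [← mmVec_mmMul]
  exact mmVec_mono (mmMul_mmStar_le M) (fun _ => le_rfl) i

lemma mmStar_vec_le_sup (y : α → B) (i : α) :
    mmVec (mmStar M) y i ≤ y i ⊔ mmVec M (mmVec (mmStar M) y) i := by
  rw [← mmVec_mmId y i, ← mmVec_mmMul, ← mmVec_sup_left]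
  exact mmVec_mono (mmStar_le_mmId_sup M) (fun _ => le_rfl) i

lemma mmStar_vec_le_of_mmVec_le {x y : α → B} (hx : ∀ i, mmVec M x i ≤ x i)
    (hy : ∀ i, y i ≤ x i) (i : α) : mmVec (mmStar M) y i ≤ x i :=
  iSup_le fun k => by
    rw [mmStar, iSup₂_inf_eq]
    exact iSup₂_le fun t _ => (inf_le_inf_left _ (hy k)).trans <|
      (inf_le_mmVec _ x i k).trans (mmPow_vec_le_of_mmVec_le M hx t i)

lemma mmStarLam_vec_le (lam : B) (z : α → B) (i : α) : mmVec (mmStarLam M lam) z i ≤ lam :=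
  mmVec_le_of_le fun _ => inf_le_left.trans inf_le_left

lemma mmStarLam_vec_le_mmVec (lam : B) (z : α → B) (i : α) :
    mmVec (mmStarLam M lam) z i ≤ mmVec M (mmVec (mmStarLam M lam) z) i := by
  rw [← mmVec_mmMul]
  exact mmVec_mono (mmStarLam_le_mmMul M lam) (fun _ => le_rfl) i

lemma mmVec_mmStarLam_vec_le (lam : B) (z : α → B) (i : α) :
    mmVec M (mmVec (mmStarLam M lam) z) i ≤ mmVec (mmStarLam M lam) z i := by
  rw [← mmVec_mmMul]
  exact mmVec_mono (mmMul_mmStarLam_le M lam) (fun _ => le_rfl) i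

lemma le_mmPow_vec_sup_mmStar_vec {x b : α → B} (hx : ∀ i, mmVec M x i ⊔ b i = x i) (t : ℕ)
    (i : α) : x i ≤ mmVec (mmPow M t) x i ⊔ mmVec (mmStar M) b i := by
  induction t generalizing i with
  | zero => exact le_sup_of_le_left (mmVec_mmId x i).ge
  | succ t ih =>
    rw [← hx i, mmPow, mmVec_mmMul]
    refine sup_le ((mmVec_mono (fun _ _ => le_rfl) ih i).trans ?_)
      (le_sup_of_le_right (le_mmStar_vec M b i))
    rw [mmVec_sup]
    exact sup_le_sup_left (mmVec_mmStar_vec_le M b i) _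

lemma mmPow_card_vec_le_mmStarLam_vec {x : α → B} {lam : B} (hx : ∀ i, mmVec M x i ≤ x i)
    (hlam : ∀ i, x i ≤ lam) (i : α) :
    mmVec (mmPow M (Fintype.card α)) x i ≤ mmVec (mmStarLam M lam) x i :=
  iSup_le fun k => by
    rcases eq_bot_or_bot_lt (mmPow M (Fintype.card α) i k ⊓ x k) with h | hv
    · exact h.le.trans bot_le
    obtain ⟨l, a, c, hc, hac, hil, hll, hlk⟩ := exists_cycle_of_le_mmPow_card M hv inf_le_left
    have hxl : mmPow M (Fintype.card α) i k ⊓ x k ≤ x l :=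
      (le_inf hlk inf_le_right).trans <|
        (inf_le_mmVec _ x l k).trans (mmPow_vec_le_of_mmVec_le M hx _ l)
    refine le_trans ?_ (inf_le_mmVec _ x i l)
    have hcyc := hll.trans (mmPow_le_mmPlus M hc (by omega) l l)
    have hpath := hil.trans (mmPow_le_mmStar M (by omega) i l)
    exact le_inf (le_inf (le_inf (hxl.trans (hlam l)) hcyc) hpath) hxl

theorem bounded_solution_iff {b : α → B} {lam : B} (hb : ∀ i, mmVec (mmStar M) b i ≤ lam)
    (x : α → B) :
    ((∀ i, mmVec M x i ⊔ b i = x i) ∧ ∀ i, x i ≤ lam) ↔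
      ∃ z : α → B, x = fun i => mmVec (mmStar M) b i ⊔ mmVec (mmStarLam M lam) z i := by
  constructor
  · rintro ⟨hx, hlam⟩
    have hMx : ∀ i, mmVec M x i ≤ x i := fun i => le_sup_left.trans (hx i).le
    refine ⟨x, funext fun i => le_antisymm ?_ (sup_le ?_ ?_)⟩
    · rw [sup_comm]
      exact (le_mmPow_vec_sup_mmStar_vec M hx _ i).trans
        (sup_le_sup_right (mmPow_card_vec_le_mmStarLam_vec M hMx hlam i) _)
    · exact mmStar_vec_le_of_mmVec_le M hMx (fun i => le_sup_right.trans (hx i).le) i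
    · exact (mmVec_mono (fun _ _ => inf_le_right) (fun _ => le_rfl) i).trans
        (mmStar_vec_le_of_mmVec_le M hMx (fun _ => le_rfl) i)
  · rintro ⟨z, rfl⟩
    refine ⟨fun i => le_antisymm ?_ ?_, fun i => sup_le (hb i) (mmStarLam_vec_le M lam z i)⟩
    · rw [mmVec_sup]
      exact sup_le (sup_le_sup (mmVec_mmStar_vec_le M b i) (mmVec_mmStarLam_vec_le M lam z i))
        (le_sup_of_le_left (le_mmStar_vec M b i))
    · rw [mmVec_sup]
      refine sup_le ((mmStar_vec_le_sup M b i).trans ?_)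
        ((mmStarLam_vec_le_mmVec M lam z i).trans ?_)
      · rw [sup_comm]
        exact sup_le_sup_right le_sup_left _
      · exact le_sup_of_le_left le_sup_right

end Solutions

section Partition

variable {n : ℕ} (A : Matrix (Fin n) (Fin n) B) (lam : B)

lemma mmVec_subM_lam_sup_lamSub {K L T : Finset (Fin n)} (hT : T ⊆ L) (z : ↥T → B) (k : ↥K) :
    mmVec (subM A K L) (fun ℓ => lam ⊔ mmVec (LamSub lam L T) z ℓ) k =
      (lam ⊓ mmVec (subM A K L) (fun _ => 1) k) ⊔
        mmVec (subM A K T) (mmVec (LamSub lam T T) z) k := by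
  rw [mmVec_sup, mmVec_const]
  refine le_antisymm (sup_le le_sup_left ?_) (sup_le_sup_left ?_ _)
  · refine iSup_le fun ℓ => ?_
    rw [mmVec, inf_iSup_eq]
    refine iSup_le fun t => ?_
    by_cases hℓ : (ℓ : Fin n) ∈ T
    · refine le_sup_of_le_right ((inf_le_inf_left _ ?_).trans
        (inf_le_mmVec (subM A K T) _ k ⟨ℓ, hℓ⟩))
      exact le_iSup_of_le t le_rfl
    · have hℓt : (ℓ : Fin n) ≠ t := fun h => hℓ (h ▸ t.2)
      refine le_sup_of_le_left (le_inf ?_ ?_)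
      · exact inf_le_right.trans (inf_le_left.trans (if_neg hℓt).le)
      · exact le_iSup_of_le ℓ (inf_le_inf_left _ unitInterval.le_one')
  · exact iSup_le fun t =>
      inf_le_mmVec (subM A K L) (mmVec (LamSub lam L T) z) k ⟨t, hT t.2⟩

lemma LtilSet_subset (K L : Finset (Fin n)) : LtilSet A lam K L ⊆ L :=
  sdiff_subset

lemma mmMul_mmStar_subM_LtilSet_le {K L : Finset (Fin n)} (i : ↥K)
    (t : ↥(LtilSet A lam K L)) :
    mmMul (mmStar (subM A K K)) (subM A K (LtilSet A lam K L)) i t ≤ lam := by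
  obtain ⟨htL, htL'⟩ := mem_sdiff.mp t.2
  have ht : (t : Fin n) ∉ LgtKset A lam K L := fun h => htL' (mem_union_right _ h)
  simp only [LgtKset, mem_filter, not_and, not_lt] at ht
  exact (le_iSup_of_le i le_rfl).trans (ht htL)

end Partition

theorem stmt16_general {n : ℕ} (A : Matrix (Fin n) (Fin n) B) (lam : B) (K L : Finset (Fin n))
    (zLt : ↥(LtilSet A lam K L) → B) (xL : ↥L → B)
    (hxL : xL = fun ℓ => lam ⊔ mmVec (LamSub lam L (LtilSet A lam K L)) zLt ℓ)
    (xK : ↥K → B) :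
    ((∀ i, mmVec (subM A K K) xK i ⊔ mmVec (subM A K L) xL i = xK i) ∧
      ∀ i, xK i ≤ lam) ↔
      ∃ zK : ↥K → B,
        xK = fun i =>
          (lam ⊓ mmVec (mmMul (mmStar (subM A K K)) (subM A K L)) (fun _ => 1) i) ⊔
          mmVec (mmMul (mmMul (mmStar (subM A K K)) (subM A K (LtilSet A lam K L)))
            (LamSub lam (LtilSet A lam K L) (LtilSet A lam K L))) zLt i ⊔
          mmVec (mmStarLam (subM A K K) lam) zK i := by
  subst hxL
  have hstar : ∀ i, mmVec (mmStar (subM A K K)) (mmVec (subM A K L) fun ℓ =>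
      lam ⊔ mmVec (LamSub lam L (LtilSet A lam K L)) zLt ℓ) i =
        (lam ⊓ mmVec (mmMul (mmStar (subM A K K)) (subM A K L)) (fun _ => 1) i) ⊔
          mmVec (mmMul (mmMul (mmStar (subM A K K)) (subM A K (LtilSet A lam K L)))
            (LamSub lam (LtilSet A lam K L) (LtilSet A lam K L))) zLt i := by
    intro i
    rw [funext (mmVec_subM_lam_sup_lamSub A lam (LtilSet_subset A lam K L) zLt), mmVec_sup,
      mmVec_inf_const, mmVec_mmMul, mmVec_mmMul, mmVec_mmMul]
  have hle : ∀ i, mmVec (mmStar (subM A K K)) (mmVec (subM A K L) fun ℓ =>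
      lam ⊔ mmVec (LamSub lam L (LtilSet A lam K L)) zLt ℓ) i ≤ lam := fun i =>
    (hstar i).trans_le <| sup_le inf_le_left <| mmVec_le_of_le fun _ =>
      iSup_le fun t => inf_le_left.trans (mmMul_mmStar_subM_LtilSet_le A lam i t)
  rw [bounded_solution_iff _ hle]
  simp only [hstar]

/-- For `x_L = λ·1_L ⊕ Λ_{L,L̃} ⊗ z_{L̃}`, the set of vectors
`x_K ≤ λ·1_K` solving `A_{KK} ⊗ x_K ⊕ A_{KL} ⊗ x_L = x_K` equals
`S_K(x_L,λ) = { λ ⊗ (A_{KK})* ⊗ A_{KL} ⊗ 1_L ⊕ (A_{KK})* ⊗ A_{KL̃} ⊗ Λ_{L̃,L̃} ⊗ z_{L̃}`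
`⊕ (A_{KK})*_λ ⊗ z_K : z_K ∈ B^{|K|} }`. -/
theorem stmt16 {n : ℕ} (A : Matrix (Fin n) (Fin n) B) (lam : B) (K L : Finset (Fin n))
    (hU : K ∪ L = Finset.univ) (hD : Disjoint K L)
    (zLt : ↥(LtilSet A lam K L) → B) (xL : ↥L → B)
    (hxL : xL = fun ℓ => lam ⊔ mmVec (LamSub lam L (LtilSet A lam K L)) zLt ℓ)
    (xK : ↥K → B) :
    ((∀ i, mmVec (subM A K K) xK i ⊔ mmVec (subM A K L) xL i = xK i) ∧
      ∀ i, xK i ≤ lam) ↔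
      ∃ zK : ↥K → B,
        xK = fun i =>
          (lam ⊓ mmVec (mmMul (mmStar (subM A K K)) (subM A K L)) (fun _ => 1) i) ⊔
          mmVec (mmMul (mmMul (mmStar (subM A K K)) (subM A K (LtilSet A lam K L)))
            (LamSub lam (LtilSet A lam K L) (LtilSet A lam K L))) zLt i ⊔
          mmVec (mmStarLam (subM A K K) lam) zK i :=
  stmt16_general A lam K L zLt xL hxL xK
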